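/- arXiv:0907.1879 — 3 statements merged into one kernel-verified Lean document; each statement's English description precedes it below -/
import Mathlib

section
/- Every finite group all of whose Sylow subgroups are either cyclic or generalized quaternion contains no subgroup S of order > 1 such that |S| is a perfect square and S admits a nondegenerate 2-cocycle (i.e., S is of central type with |S| = m² and the twisted group algebra ℂ_α S is isomorphic to M_m(ℂ)); in particular, binary polyhedral groups admit no nontrivial cocycle deformation. -/
/-!
Abelian subgroups of cyclic groups and of generalized quaternion groups are cyclic. Hence every
Sylow subgroup of an abelian subgroup `A ≤ G` is cyclic, and so is `A` itself. Consequently two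
commuting elements of `S` are powers of a single element `g`. On the powers of `g` a 2-cocycle is
a coboundary up to a constant, `α(gⁱ, gʲ) = α(1, 1) F(i + j) / (F(i) F(j))` with
`F(n) = ∏_{k < n} α(g, gᵏ)`, so it is symmetric there, and no `s ≠ 1` admits a commuting `t` with
`α(s, t) ≠ α(t, s)`.
-/

theorem ZMod.eq_zero_or_eq_of_add_self_eq_zero {n : ℕ} [NeZero n] {k : ZMod (2 * n)}
    (h : k + k = 0) : k = 0 ∨ k = n := by
  obtain ⟨v, hv, rfl⟩ : ∃ v < 2 * n, (v : ZMod (2 * n)) = k :=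
    ⟨k.val, k.val_lt, k.natCast_zmod_val⟩
  rw [← Nat.cast_add, ZMod.natCast_eq_zero_iff, ← two_mul] at h
  obtain ⟨c, hc⟩ := (Nat.mul_dvd_mul_iff_left two_pos).mp h
  have : c < 2 := Nat.lt_of_mul_lt_mul_left (a := n) (by omega)
  interval_cases c <;> simp [hc]

def AbelianSubgroupsCyclic (G : Type*) [Group G] : Prop :=
  ∀ (H : Subgroup G) [IsMulCommutative H], IsCyclic H

namespace AbelianSubgroupsCyclic

variable {G H : Type*} [Group G] [Group H]

theorem of_isCyclic [IsCyclic G] : AbelianSubgroupsCyclic G := fun _ _ ↦ inferInstance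

theorem of_injective {f : G →* H} (hf : Function.Injective f) (hH : AbelianSubgroupsCyclic H) :
    AbelianSubgroupsCyclic G := fun K _ ↦
  have := hH (K.map f)
  isCyclic_of_surjective _ (K.equivMapOfInjective f hf).symm.surjective

theorem isCyclic_of_le {P K : Subgroup G} (hP : AbelianSubgroupsCyclic P) (hKP : K ≤ P)
    [IsMulCommutative K] : IsCyclic K :=
  have := hP (K.subgroupOf P)
  isCyclic_of_surjective _ (Subgroup.subgroupOfEquivOfLe hKP).surjective

open scoped IsMulCommutative in
theorem of_sylow [Finite G]
    (h : ∀ (p : ℕ) [Fact p.Prime] (P : Sylow p G), AbelianSubgroupsCyclic P) :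
    AbelianSubgroupsCyclic G := by
  intro A _
  have : IsZGroup A := ⟨fun p hp P ↦ by
    have := Fact.mk hp
    obtain ⟨Q, hQ⟩ := (P.isPGroup'.map A.subtype).exists_le_sylow
    have := (h p Q).isCyclic_of_le hQ
    exact isCyclic_of_surjective _ (P.1.equivMapOfInjective _ A.subtype_injective).symm.surjective⟩
  -- an abelian Z-group is nilpotent, hence cyclic
  infer_instance

theorem exists_pow_eq_of_commute [Finite G] (hG : AbelianSubgroupsCyclic G) {x y : G}
    (h : Commute x y) : ∃ (g : G) (i j : ℕ), g ^ i = x ∧ g ^ j = y := by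
  let A := Subgroup.closure {x, y}
  have : IsMulCommutative A := Subgroup.isMulCommutative_closure (by
    rintro _ (rfl | rfl) _ (rfl | rfl) <;> first | rfl | exact h.eq | exact h.eq.symm)
  obtain ⟨g, hg⟩ := (hG A).exists_generator
  have hpow {z : G} (hz : z ∈ A) : ∃ i : ℕ, (g : G) ^ i = z := by
    obtain ⟨i, hi⟩ := mem_powers_iff_mem_zpowers.mpr (hg ⟨z, hz⟩)
    exact ⟨i, congrArg Subtype.val hi⟩
  obtain ⟨i, hi⟩ := hpow (Subgroup.subset_closure (Set.mem_insert x {y}))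
  obtain ⟨j, hj⟩ := hpow (Subgroup.subset_closure (Set.mem_insert_of_mem x rfl))
  exact ⟨g, i, j, hi, hj⟩

end AbelianSubgroupsCyclic

namespace QuaternionGroup

variable {n : ℕ} [NeZero n]

theorem a_mem_zpowers_xa_of_commute {i k : ZMod (2 * n)} (h : Commute (xa i) (a k)) :
    a k ∈ Subgroup.zpowers (xa i) := by
  have : i + k = i - k := by simpa [xa_mul_a, a_mul_xa] using h.eq
  rcases ZMod.eq_zero_or_eq_of_add_self_eq_zero (k := k) (by linear_combination this) with
    rfl | rfl
  · exact Subgroup.one_mem _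
  · exact ⟨2, by simp [xa_sq]⟩

theorem mem_zpowers_xa_of_commute {i : ZMod (2 * n)} {y : QuaternionGroup n}
    (h : Commute (xa i) y) : y ∈ Subgroup.zpowers (xa i) := by
  cases y with
  | a k => exact a_mem_zpowers_xa_of_commute h
  | xa k =>
    have hk : xa k = a (i - k) * xa i := by simp [a_mul_xa]
    have hcomm : Commute (xa i) (a (i - k)) := by
      rw [eq_mul_inv_of_mul_eq hk.symm]
      exact h.mul_right (Commute.refl (xa i)).inv_right
    rw [hk]
    exact mul_mem (a_mem_zpowers_xa_of_commute hcomm) (Subgroup.mem_zpowers _)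

theorem abelianSubgroupsCyclic : AbelianSubgroupsCyclic (QuaternionGroup n) := by
  intro H _
  by_cases hxa : ∃ i, xa i ∈ H
  · obtain ⟨i, hi⟩ := hxa
    have : H ≤ Subgroup.zpowers (xa i) := fun y hy ↦
      mem_zpowers_xa_of_commute (setLike_mul_comm hi hy)
    exact Subgroup.isCyclic_of_le this
  · push Not at hxa
    refine Subgroup.isCyclic_of_le (H' := Subgroup.zpowers (a 1)) fun y hy ↦ ?_
    cases y with
    | a k => exact ⟨k.val, by simp only [zpow_natCast, a_one_pow, ZMod.natCast_zmod_val]⟩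
    | xa k => exact absurd hy (hxa k)

end QuaternionGroup

theorem cocycle_pow_comm {H M : Type*} [Monoid H] [CommGroup M] (α : H → H → M)
    (hα : ∀ a b c : H, α a b * α (a * b) c = α b c * α a (b * c))
    (g : H) (i j : ℕ) : α (g ^ i) (g ^ j) = α (g ^ j) (g ^ i) := by
  set F : ℕ → M := fun n ↦ ∏ k ∈ Finset.range n, α g (g ^ k)
  have hcoboundary (m : ℕ) : ∀ n, α (g ^ m) (g ^ n) * (F m * F n) = α 1 1 * F (m + n) := by
    induction m with
    | zero =>
      intro n
      have := hα 1 1 (g ^ n)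
      simp only [one_mul, mul_left_inj] at this
      simp [F, this]
    | succ m ih =>
      intro n
      have h := hα g (g ^ m) (g ^ n)
      rw [← pow_succ', ← pow_add] at h
      simp only [F, Finset.prod_range_succ, Nat.succ_add] at ih ⊢
      grind
  have := (hcoboundary i j).trans ((hcoboundary j i).trans (by rw [add_comm])).symm
  rwa [mul_comm (F i), mul_left_inj] at this

theorem stmt_6_general (G : Type*) [Group G] [Finite G]
    (hSyl : ∀ (p : ℕ) [Fact p.Prime] (P : Sylow p G),
      IsCyclic P ∨ ∃ j : ℕ, 1 ≤ j ∧ Nonempty (P ≃* QuaternionGroup (2 ^ j)))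
    (S : Subgroup G)
    (α : S → S → ℂˣ)
    (hcocycle : ∀ a b c : S, α a b * α (a * b) c = α b c * α a (b * c))
    (hnondeg : ∀ s : S, s ≠ 1 → ∃ t : S, Commute s t ∧ α s t ≠ α t s) :
    Nat.card S = 1 := by
  have hG : AbelianSubgroupsCyclic G := .of_sylow fun p _ P ↦ by
    rcases hSyl p P with _ | ⟨j, -, ⟨e⟩⟩
    · exact .of_isCyclic
    · exact .of_injective (f := e.toMonoidHom) e.injective QuaternionGroup.abelianSubgroupsCyclic
  have hS : AbelianSubgroupsCyclic S := .of_injective S.subtype_injective hG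
  have hS1 (s : S) : s = 1 := by
    by_contra hs
    obtain ⟨t, hst, hne⟩ := hnondeg s hs
    obtain ⟨g, i, j, rfl, rfl⟩ := hS.exists_pow_eq_of_commute hst
    exact hne (cocycle_pow_comm α hcocycle g i j)
  exact Nat.card_eq_one_iff_unique.mpr ⟨subsingleton_of_forall_eq 1 hS1, inferInstance⟩

/-- If every Sylow subgroup of a finite group `G` is cyclic or generalized
quaternion, then `G` has no nontrivial subgroup `S` of square order admitting a
nondegenerate 2-cocycle `α` (i.e. no nontrivial subgroup of central type); here
nondegeneracy is expressed by the standard criterion that the identity is the only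
`α`-regular element: for every `s ≠ 1` there is a `t` commuting with `s` such that
`α(s,t) ≠ α(t,s)`.  In particular binary polyhedral groups (whose Sylow subgroups are
cyclic or generalized quaternion) admit no nontrivial cocycle deformation. -/
theorem stmt_6 (G : Type*) [Group G] [Finite G]
    (hSyl : ∀ (p : ℕ) [Fact p.Prime] (P : Sylow p G),
      IsCyclic P ∨ ∃ j : ℕ, 1 ≤ j ∧ Nonempty (P ≃* QuaternionGroup (2 ^ j)))
    (S : Subgroup G) (m : ℕ) (hm : Nat.card S = m ^ 2)
    (α : S → S → ℂˣ)
    (hcocycle : ∀ a b c : S, α a b * α (a * b) c = α b c * α a (b * c))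
    (hnondeg : ∀ s : S, s ≠ 1 → ∃ t : S, Commute s t ∧ α s t ≠ α t s) :
    Nat.card S = 1 :=
  stmt_6_general G hSyl S α hcocycle hnondeg
end

section
/- Let H be a finite-dimensional algebra over an algebraically closed field k of characteristic zero that decomposes as a crossed product k^Γ # kℤ_m (a smash product of the function algebra on a finite group Γ with the group algebra of ℤ/m acting on Γ by automorphisms). Then every irreducible H-module has dimension dividing m. -/
/-!
Write `e x` for the image in `H` of the indicator of `x ∈ Γ`. These are complete orthogonal
idempotents and `u g * e x = e (g • x) * u g`. A simple module `M` is finite-dimensional and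
some weight space `e x • M` is nonzero; it is stable under the stabilizer of `x`, a subgroup of a
cyclic group, so (as `k` is algebraically closed) it contains a common eigenvector `v` of that
cyclic group. The translates `u g • v`, one for each point `g • x` of the orbit, lie in distinct
weight spaces, hence are independent, and they span `M = H • v`. So `dim M = |orbit of x|`,
which divides `m` by the orbit–stabilizer theorem.
-/

open Module MulAction

namespace OrthogonalIdempotents

variable {R M I : Type*} [Ring R] [AddCommGroup M] [Module R M] {e : I → R}

theorem smul_eq_zero_of_smul_eq_self (he : OrthogonalIdempotents e) {i j : I} (hij : i ≠ j)
    {v : M} (hv : e j • v = v) : e i • v = 0 := by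
  rw [← hv, ← mul_smul, he.ortho hij, zero_smul]

theorem linearIndependent_of_smul_eq_self {k ι : Type*} [Field k] [Module k M]
    [SMulCommClass R k M] (he : OrthogonalIdempotents e) {w : ι → M} {f : ι → I}
    (hf : Function.Injective f) (hw : ∀ i, e (f i) • w i = w i) (hw0 : ∀ i, w i ≠ 0) :
    LinearIndependent k w := by
  rw [linearIndependent_iff']
  intro s c hsum i hi
  have hproj : e (f i) • ∑ j ∈ s, c j • w j = c i • w i := by
    rw [Finset.smul_sum, Finset.sum_eq_single_of_mem i hi fun j _ hji => by
      rw [smul_comm, he.smul_eq_zero_of_smul_eq_self (hf.ne hji).symm (hw j), smul_zero]]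
    rw [smul_comm, hw]
  rw [hsum, smul_zero] at hproj
  exact (smul_eq_zero.mp hproj.symm).resolve_right (hw0 i)

end OrthogonalIdempotents

theorem CompleteOrthogonalIdempotents.exists_smul_ne_zero {R M I : Type*} [Ring R]
    [AddCommGroup M] [Module R M] [Fintype I] {e : I → R} (he : CompleteOrthogonalIdempotents e)
    {v : M} (hv : v ≠ 0) : ∃ i, e i • v ≠ 0 := by
  by_contra! h
  rw [← one_smul R v, ← he.complete, Finset.sum_smul, Finset.sum_eq_zero fun i _ => h i] at hv
  exact hv rfl

theorem Module.End.exists_hasEigenvector_mem_of_mapsTo {K V : Type*} [Field K] [IsAlgClosed K]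
    [AddCommGroup V] [Module K V] [FiniteDimensional K V] (f : End K V) {p : Submodule K V}
    (hp : p ≠ ⊥) (hf : Set.MapsTo f p p) : ∃ μ v, v ∈ p ∧ f.HasEigenvector μ v := by
  have : Nontrivial p := Submodule.nontrivial_iff_ne_bot.mpr hp
  obtain ⟨μ, hμ⟩ := exists_eigenvalue (f.restrict hf)
  obtain ⟨w, hw⟩ := hμ.exists_hasEigenvector
  refine ⟨μ, w, w.2, mem_eigenspace_iff.mpr (congrArg Subtype.val hw.apply_eq_smul), ?_⟩
  simpa using hw.2

theorem Module.Finite.of_surjective_sum_mul_units {k X G H : Type*} [CommSemiring k] [Fintype X]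
    [Monoid G] [Fintype G] [Semiring H] [Algebra k H] {ι : (X → k) →ₐ[k] H} {u : G →* Hˣ}
    (hspan : Function.Surjective fun F : G → X → k => ∑ g, ι (F g) * u g) : Module.Finite k H :=
  Module.Finite.of_surjective
    (∑ g, (LinearMap.mulRight k (u g : H)).comp (ι.toLinearMap.comp (LinearMap.proj g))) fun h => by
      obtain ⟨F, rfl⟩ := hspan h
      exact ⟨F, by simp [LinearMap.sum_apply]⟩

section SmashProduct

variable {k X G H : Type*} [Field k] [DecidableEq X] [Group G] [MulAction G X]
  [Ring H] [Algebra k H]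

def pointIdempotent (ι : (X → k) →ₐ[k] H) (x : X) : H := ι (Pi.single x 1)

def IsCovariant (ι : (X → k) →ₐ[k] H) (u : G →* Hˣ) : Prop :=
  ∀ g f, (u g : H) * ι f = ι (fun y => f (g⁻¹ • y)) * u g

theorem completeOrthogonalIdempotents_pointIdempotent [Fintype X] (ι : (X → k) →ₐ[k] H) :
    CompleteOrthogonalIdempotents (pointIdempotent ι) :=
  (CompleteOrthogonalIdempotents.single fun _ : X => k).map ι.toRingHom

theorem algHom_mul_pointIdempotent (ι : (X → k) →ₐ[k] H) (f : X → k) (x : X) :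
    ι f * pointIdempotent ι x = f x • pointIdempotent ι x := by
  rw [pointIdempotent, ← map_mul, ← map_smul, ← Pi.single_mul_right, ← Pi.single_smul, smul_eq_mul]

theorem units_mul_pointIdempotent {ι : (X → k) →ₐ[k] H} {u : G →* Hˣ}
    (hcov : IsCovariant ι u) (g : G) (x : X) :
    (u g : H) * pointIdempotent ι x = pointIdempotent ι (g • x) * u g := by
  rw [pointIdempotent, hcov g]
  congr 3
  ext y
  simp [Pi.single_apply, inv_smul_eq_iff]

variable {M : Type*} [AddCommGroup M] [Module H M]

theorem pointIdempotent_smul_units_smul {ι : (X → k) →ₐ[k] H} {u : G →* Hˣ}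
    (hcov : IsCovariant ι u) (g : G) {x : X} {v : M}
    (hv : pointIdempotent ι x • v = v) :
    pointIdempotent ι (g • x) • (u g : H) • v = (u g : H) • v := by
  rw [← mul_smul, ← units_mul_pointIdempotent hcov, mul_smul, hv]

variable [Module k M] [IsScalarTower k H M]

theorem algHom_smul_of_pointIdempotent_smul (ι : (X → k) →ₐ[k] H) (f : X → k) {x : X} {v : M}
    (hv : pointIdempotent ι x • v = v) : ι f • v = f x • v := by
  rw [← hv, ← mul_smul, algHom_mul_pointIdempotent, smul_assoc]

variable {ι : (X → k) →ₐ[k] H} {u : G →* Hˣ}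

theorem exists_ne_zero_forall_stabilizer_smul_eq_smul [IsAlgClosed k] [FiniteDimensional k M]
    [Finite G] [IsCyclic G]
    (hcov : IsCovariant ι u) {x : X} {v₀ : M}
    (hv₀ : pointIdempotent ι x • v₀ = v₀) (hv₀0 : v₀ ≠ 0) :
    ∃ v : M, v ≠ 0 ∧ pointIdempotent ι x • v = v ∧
      ∀ c ∈ stabilizer G x, ∃ μ : k, (u c : H) • v = μ • v := by
  let ρ := Module.toModuleEnd k (S := H) M
  obtain ⟨c₀, hc₀⟩ := IsCyclic.exists_monoid_generator (α := stabilizer G x)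
  have hcomm : Commute (ρ (pointIdempotent ι x)) (ρ (u c₀)) := by
    refine Commute.map ?_ ρ
    have := units_mul_pointIdempotent hcov (c₀ : G) x
    rw [mem_stabilizer_iff.mp c₀.2] at this
    exact this.symm
  have hne : (ρ (pointIdempotent ι x)).eigenspace 1 ≠ ⊥ :=
    (Submodule.ne_bot_iff _).mpr ⟨v₀, End.mem_eigenspace_iff.mpr (by simpa [ρ] using hv₀), hv₀0⟩
  obtain ⟨μ, v, hvx, hv⟩ := (ρ (u c₀)).exists_hasEigenvector_mem_of_mapsTo hne
    (End.mapsTo_genEigenspace_of_comm hcomm 1 1)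
  refine ⟨v, hv.2, by simpa [ρ] using End.mem_eigenspace_iff.mp hvx, fun c hc => ?_⟩
  obtain ⟨n, hn⟩ := Submonoid.mem_powers_iff _ _ |>.mp (hc₀ ⟨c, hc⟩)
  refine ⟨μ ^ n, ?_⟩
  have hcn : (c₀ : G) ^ n = c := congrArg Subtype.val hn
  rw [← hcn, map_pow, Units.val_pow_eq_pow_val]
  have hpow := hv.pow_apply n
  rw [← map_pow] at hpow
  simpa [ρ] using hpow

theorem finrank_eq_ncard_orbit [Fintype X] [Fintype G] [IsSimpleModule H M]
    (hcov : IsCovariant ι u)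
    (hspan : Function.Surjective fun F : G → X → k => ∑ g, ι (F g) * u g)
    {x : X} {v : M} (hv0 : v ≠ 0) (hvx : pointIdempotent ι x • v = v)
    (hstab : ∀ c ∈ stabilizer G x, ∃ μ : k, (u c : H) • v = μ • v) :
    finrank k M = (orbit G x).ncard := by
  choose rep hrep using fun y : orbit G x => mem_orbit_iff.mp y.2
  let w : orbit G x → M := fun y => (u (rep y) : H) • v
  have hw : ∀ y : orbit G x, pointIdempotent ι y • w y = w y := fun y => by
    simpa only [hrep y] using pointIdempotent_smul_units_smul hcov (rep y) hvx
  have hw0 : ∀ y, w y ≠ 0 := fun y => (smul_ne_zero_iff_ne (u (rep y))).mpr hv0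
  have hli : LinearIndependent k w :=
    (completeOrthogonalIdempotents_pointIdempotent ι).linearIndependent_of_smul_eq_self
      Subtype.val_injective hw hw0
  have hunits : ∀ g, ∃ μ : k, (u g : H) • v = μ • w ⟨g • x, mem_orbit x g⟩ := fun g => by
    set y : orbit G x := ⟨g • x, mem_orbit x g⟩
    obtain ⟨μ, hμ⟩ := hstab ((rep y)⁻¹ * g) <| by
      rw [mem_stabilizer_iff, mul_smul, inv_smul_eq_iff]
      exact (hrep y).symm
    refine ⟨μ, ?_⟩
    rw [show g = rep y * ((rep y)⁻¹ * g) by group, map_mul, Units.val_mul, mul_smul, hμ,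
      smul_comm]
  have hspan' : ⊤ ≤ Submodule.span k (Set.range w) := fun z _ => by
    obtain ⟨h, rfl⟩ := IsSimpleModule.toSpanSingleton_surjective H hv0 z
    obtain ⟨F, rfl⟩ := hspan h
    simp only [LinearMap.toSpanSingleton_apply, Finset.sum_smul, mul_smul]
    refine Submodule.sum_mem _ fun g _ => ?_
    obtain ⟨μ, hμ⟩ := hunits g
    rw [hμ, smul_comm (ι (F g)) μ, algHom_smul_of_pointIdempotent_smul ι _ (hw _)]
    exact Submodule.smul_mem _ _ (Submodule.smul_mem _ _ (Submodule.subset_span ⟨_, rfl⟩))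
  rw [finrank_eq_nat_card_basis (Basis.mk hli hspan'), Nat.card_coe_set_eq]

theorem finrank_dvd_card_of_isCyclic [IsAlgClosed k] [Fintype X] [Fintype G] [IsCyclic G]
    [IsSimpleModule H M] (hcov : IsCovariant ι u)
    (hspan : Function.Surjective fun F : G → X → k => ∑ g, ι (F g) * u g) :
    finrank k M ∣ Nat.card G := by
  have he := completeOrthogonalIdempotents_pointIdempotent ι
  have : Module.Finite k H := .of_surjective_sum_mul_units hspan
  have : Nontrivial M := IsSimpleModule.nontrivial H M
  obtain ⟨v₀, hv₀⟩ := exists_ne (0 : M)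
  have : Module.Finite H M := ⟨⟨{v₀}, by simpa using IsSimpleModule.span_singleton_eq_top H hv₀⟩⟩
  have : Module.Finite k M := .trans H M
  obtain ⟨x, hx⟩ := he.exists_smul_ne_zero hv₀
  obtain ⟨v, hv0, hvx, hstab⟩ := exists_ne_zero_forall_stabilizer_smul_eq_smul hcov
    (by rw [← mul_smul, (he.idem x).eq]) hx
  rw [finrank_eq_ncard_orbit hcov hspan hv0 hvx hstab, ← index_stabilizer]
  exact (stabilizer G x).index_dvd_card

end SmashProduct

theorem stmt_12_general (k : Type*) [Field k] [IsAlgClosed k]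
    (Γ : Type*) [Group Γ] [Fintype Γ] (m : ℕ) [NeZero m]
    (θ : Multiplicative (ZMod m) →* MulAut Γ)
    (H : Type*) [Ring H] [Algebra k H]
    (ι : (Γ → k) →ₐ[k] H) (u : Multiplicative (ZMod m) →* Hˣ)
    (hcov : ∀ (j : Multiplicative (ZMod m)) (f : Γ → k),
      (u j : H) * ι f = ι (f ∘ ⇑((θ j)⁻¹)) * (u j : H))
    (hfree : Function.Bijective (fun F : ZMod m → (Γ → k) =>
      ∑ j : ZMod m, ι (F j) * ((u (Multiplicative.ofAdd j)) : H)))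
    (M : Type*) [AddCommGroup M] [Module k M] [Module H M] [IsScalarTower k H M]
    (hsimple : IsSimpleModule H M) :
    Module.finrank k M ∣ m := by
  classical
  let := MulAction.compHom Γ θ
  have hcov' : IsCovariant ι u := fun j f => by
    rw [hcov, ← map_inv]
    rfl
  have hspan : Function.Surjective fun F : Multiplicative (ZMod m) → Γ → k =>
      ∑ j, ι (F j) * u j := fun h => by
    obtain ⟨F, hF⟩ := hfree.surjective h
    exact ⟨F ∘ Multiplicative.toAdd, hF ▸ Fintype.sum_equiv Multiplicative.toAdd _ _ fun _ => rfl⟩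
  simpa using finrank_dvd_card_of_isCyclic (M := M) hcov' hspan

/-- Let `H` be an algebra over an algebraically closed field `k` of
characteristic zero which decomposes as a crossed (smash) product `k^Γ # k ℤ_m`: there is
an algebra map `ι : k^Γ → H`, a group of units `u : ℤ/m → Hˣ` implementing the action `θ`
of `ℤ/m` on `Γ` (covariance relation), such that `H` is freely spanned by the `u j` over
`ι(k^Γ)`.  Then every irreducible `H`-module has `k`-dimension dividing `m`. -/
theorem stmt_12 (k : Type*) [Field k] [IsAlgClosed k] [CharZero k]
    (Γ : Type*) [Group Γ] [Fintype Γ] (m : ℕ) [NeZero m]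
    (θ : Multiplicative (ZMod m) →* MulAut Γ)
    (H : Type*) [Ring H] [Algebra k H]
    (ι : (Γ → k) →ₐ[k] H) (u : Multiplicative (ZMod m) →* Hˣ)
    (hcov : ∀ (j : Multiplicative (ZMod m)) (f : Γ → k),
      (u j : H) * ι f = ι (f ∘ ⇑((θ j)⁻¹)) * (u j : H))
    (hfree : Function.Bijective (fun F : ZMod m → (Γ → k) =>
      ∑ j : ZMod m, ι (F j) * ((u (Multiplicative.ofAdd j)) : H)))
    (M : Type*) [AddCommGroup M] [Module k M] [Module H M] [IsScalarTower k H M]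
    (hsimple : IsSimpleModule H M) :
    Module.finrank k M ∣ m :=
  stmt_12_general k Γ m θ H ι u hcov hfree M hsimple
end

section
/- Let G and G' be finite groups, χ an irreducible character of degree 2 of G over ℂ, and suppose χχ* decomposes as 1 + g + λ where g is a linear character of order 2 and λ is irreducible of degree 2 (here χ* is the dual character). Then gλ = λ; that is, g stabilizes λ under multiplication. -/
/-!
Twisting `V` by `g` gives a representation `gV` with character `gχ`. Multiplying
`χχ* = 1 + g + λ` by `g` and averaging over `G` gives
`dim Hom_G(V, gV) = ⟨gχ, χ⟩ = ⟨g, 1⟩ + ⟨g², 1⟩ + ⟨gλ, 1⟩`; each term is the dimension of a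
space of invariants and the middle one is `1` because `g² = 1`, so `Hom_G(V, gV) ≠ 0`. As `V`
is simple and `gV` has the same dimension, `V ≅ gV`, i.e. `gχ = χ`. Hence
`g + g² + gλ = gχχ* = χχ* = 1 + g + λ`, and `g² = 1` leaves `gλ = λ`.
-/

open CategoryTheory Module MonoidalCategory Representation

namespace FDRep

section Twist

variable {R G : Type} [CommRing R] [Monoid G]

noncomputable def twist (χ : G →* Rˣ) (V : FDRep R G) : FDRep R G :=
  FDRep.of
    { toFun := fun x => (χ x : R) • V.ρ x
      map_one' := by simp
      map_mul' := fun x y => by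
        rw [map_mul, map_mul, Units.val_mul, smul_mul_smul_comm] }

end Twist

variable {k G : Type} [Field k] [Group G]

theorem char_twist (χ : G →* kˣ) (V : FDRep k G) (x : G) :
    (twist χ V).character x = χ x * V.character x :=
  map_smul (LinearMap.trace k V) (χ x : k) (V.ρ x)

theorem char_tensorUnit (x : G) : (𝟙_ (FDRep k G)).character x = 1 := by
  rw [character, show (𝟙_ (FDRep k G)).ρ x = 1 from rfl, LinearMap.trace_one]
  change ((finrank k k : ℕ) : k) = 1
  simp

theorem isIso_of_mono_of_finrank_eq {V W : FDRep k G} (f : V ⟶ W) [Mono f]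
    (h : finrank k V = finrank k W) : IsIso f := by
  have hinj : Function.Injective f.hom.hom :=
    (Rep.mono_iff_injective _).1 ((forget₂ (FDRep k G) (Rep k G)).map_mono f)
  exact (ConcreteCategory.isIso_iff_bijective f).2
    ⟨hinj, (LinearMap.injective_iff_surjective_of_finrank_eq_finrank h).1 hinj⟩

theorem nonempty_iso_twist_of_finrank_hom_pos (χ : G →* kˣ) (V : FDRep k G) [Simple V]
    (h : 0 < finrank k (V ⟶ twist χ V)) : Nonempty (V ≅ twist χ V) := by
  have : Nontrivial (V ⟶ twist χ V) := Module.nontrivial_of_finrank_pos h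
  obtain ⟨f, hf⟩ := exists_ne (0 : V ⟶ twist χ V)
  have : Mono f := mono_of_nonzero_from_simple hf
  -- twisting does not change the underlying space
  have : IsIso f := isIso_of_mono_of_finrank_eq f rfl
  exact ⟨asIso f⟩

variable [Fintype G] [Invertible (Nat.card G : k)]

theorem average_linearChar_mul_char_eq_finrank_invariants (χ : G →* kˣ) (V : FDRep k G) :
    (Nat.card G : k)⁻¹ * ∑ x : G, χ x * V.character x =
      finrank k (invariants (twist χ V).ρ) := by
  simp only [← char_twist, average_char_eq_finrank_invariants]

end FDRep

open FDRep

theorem stmt_17_general (G : Type) [Group G] [Finite G]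
    (V W : FDRep ℂ G) [Simple V]
    (g : G →* ℂˣ) (hg2 : g * g = 1)
    (hdecomp : ∀ x : G,
      V.character x * V.character x⁻¹ = 1 + (g x : ℂ) + W.character x) :
    ∀ x : G, (g x : ℂ) * W.character x = W.character x := by
  have := Fintype.ofFinite G
  have := invertibleOfPos (K := ℂ) (Nat.card G)
  have hsq (x : G) : (g x : ℂ) * g x = 1 := by
    simpa using congrArg (fun φ : G →* ℂˣ => (φ x : ℂ)) hg2
  have hdim : finrank ℂ (V ⟶ twist g V) =
      finrank ℂ (invariants (twist g (𝟙_ (FDRep ℂ G))).ρ) + 1 +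
        finrank ℂ (invariants (twist g W).ρ) := by
    have hcard : (Nat.card G : ℂ)⁻¹ * ∑ _x : G, (1 : ℂ) = 1 := by
      rw [Finset.sum_const, Finset.card_univ, ← Nat.card_eq_fintype_card, nsmul_one,
        inv_mul_cancel_of_invertible]
    apply Nat.cast_injective (R := ℂ)
    push_cast
    rw [← scalar_product_char_eq_finrank_equivariant,
      ← average_linearChar_mul_char_eq_finrank_invariants,
      ← average_linearChar_mul_char_eq_finrank_invariants, ← hcard]
    simp only [← mul_add, ← Finset.sum_add_distrib]
    congr! 2 with x
    rw [char_twist, char_tensorUnit, mul_assoc, hdecomp, ← hsq x]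
    ring
  obtain ⟨e⟩ := nonempty_iso_twist_of_finrank_hom_pos g V (by omega)
  intro x
  have hχ : (g x : ℂ) * V.character x = V.character x := by rw [← char_twist, ← char_iso e]
  linear_combination V.character x⁻¹ * hχ - hsq x - ((g x : ℂ) - 1) * hdecomp x

/-- Let `χ` be an irreducible complex character of degree `2` of a finite
group `G` (character of a simple `2`-dimensional representation `V`), and suppose
`χχ* = 1 + g + λ` where `g` is a linear character of order `2` and `λ` is an irreducible
character of degree `2` (of a simple representation `W`); here `χ*(x) = χ(x⁻¹)` is the
dual character.  Then `gλ = λ`. -/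
theorem stmt_17 (G : Type) [Group G] [Finite G]
    (V W : FDRep ℂ G) [Simple V] [Simple W]
    (hV : finrank ℂ V = 2) (hW : finrank ℂ W = 2)
    (g : G →* ℂˣ) (hg1 : g ≠ 1) (hg2 : g * g = 1)
    (hdecomp : ∀ x : G,
      V.character x * V.character x⁻¹ = 1 + (g x : ℂ) + W.character x) :
    ∀ x : G, (g x : ℂ) * W.character x = W.character x :=
  stmt_17_general G V W g hg2 hdecomp
end
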